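/- (At-the-money Edgeworth price.) For all reals ν, B, μ3, μ4, ν·B·∫_0^∞ z·g₂(z) dz = (1/√(2π))·ν·B·(1 − (μ4 − 3 − μ3²)/24). -/

import Mathlib

open MeasureTheory Real Set

/-- The standard normal density `φ(z) = (2π)^(−1/2) exp(−z²/2)`. -/
noncomputable def φ (z : ℝ) : ℝ := (Real.sqrt (2 * Real.pi))⁻¹ * Real.exp (-z ^ 2 / 2)

/-- The Hermite polynomials defined by `H n z * φ z = φ⁽ⁿ⁾ z`. -/
noncomputable def H (n : ℕ) (z : ℝ) : ℝ := iteratedDeriv n φ z / φ z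

/-- The fourth-order Gram–Charlier density with skewness `μ3` and kurtosis `μ4`. -/
noncomputable def g₁ (μ3 μ4 z : ℝ) : ℝ :=
  φ z * (1 - μ3 / 6 * H 3 z + (μ4 - 3) / 24 * H 4 z)

/-- The fourth-order Edgeworth density with skewness `μ3` and kurtosis `μ4`. -/
noncomputable def g₂ (μ3 μ4 z : ℝ) : ℝ :=
  g₁ μ3 μ4 z + φ z * (μ3 ^ 2 / 72) * H 6 z

/-! Since `φ z * H n z = φ⁽ⁿ⁾ z`, the integrand is a combination of `z * φ⁽ⁿ⁾ z` for
`n = 0, 3, 4, 6`. The function `z * φ⁽ⁿ⁺¹⁾ z - φ⁽ⁿ⁾ z` is an antiderivative of `z * φ⁽ⁿ⁺²⁾ z`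
vanishing at infinity (each `φ⁽ⁿ⁾` is a Hermite polynomial times a Gaussian), so
`∫₀^∞ z φ⁽ⁿ⁺²⁾ = φ⁽ⁿ⁾(0)`, and likewise `∫₀^∞ z φ = φ(0)`. The values `φ'(0) = 0`,
`φ''(0) = -φ(0)` and `φ⁽⁴⁾(0) = 3 φ(0)` then give `φ(0) (1 - (μ4 - 3) / 24 + 3 μ3² / 72)`. -/

open Polynomial Filter Topology

lemma φ_eq_mul_gaussian : φ = fun z => (√(2 * π))⁻¹ * exp (-(z ^ 2 / 2)) := by
  funext z
  rw [φ, neg_div]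

lemma φ_pos (z : ℝ) : 0 < φ z := by
  unfold φ
  positivity

lemma contDiff_φ : ContDiff ℝ ⊤ φ := by
  rw [φ_eq_mul_gaussian]
  fun_prop

lemma iteratedDeriv_φ (n : ℕ) (z : ℝ) :
    iteratedDeriv n φ z = (-1) ^ n * aeval z (hermite n) * φ z := by
  rw [φ_eq_mul_gaussian, iteratedDeriv_const_mul_field, iteratedDeriv_eq_iterate,
    deriv_gaussian_eq_hermite_mul_gaussian]
  ring

lemma φ_mul_H (n : ℕ) (z : ℝ) : φ z * H n z = iteratedDeriv n φ z :=
  mul_div_cancel₀ _ (φ_pos z).ne'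

lemma hasDerivAt_iteratedDeriv_φ (n : ℕ) (z : ℝ) :
    HasDerivAt (iteratedDeriv n φ) (iteratedDeriv (n + 1) φ z) z := by
  rw [iteratedDeriv_succ]
  exact ((contDiff_φ.differentiable_iteratedDeriv n (by simp)) z).hasDerivAt

lemma integrable_pow_mul_φ (k : ℕ) : Integrable fun z => z ^ k * φ z := by
  have h := integrable_rpow_mul_exp_neg_mul_sq (b := 1 / 2) (by norm_num)
    (s := k) (by linarith [(Nat.cast_nonneg k : (0 : ℝ) ≤ k)])
  refine (h.const_mul (√(2 * π))⁻¹).congr (.of_forall fun z => ?_)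
  simp only [φ_eq_mul_gaussian, rpow_natCast]
  ring_nf

lemma tendsto_pow_mul_φ_atTop (k : ℕ) : Tendsto (fun z => z ^ k * φ z) atTop (𝓝 0) := by
  have h := (rpow_mul_exp_neg_mul_sq_isLittleO_exp_neg one_half_pos k).tendsto_zero_of_tendsto
    (tendsto_exp_atBot.comp (tendsto_id.const_mul_atTop_of_neg (neg_lt_zero.mpr one_half_pos)))
  rw [← mul_zero (√(2 * π))⁻¹]
  refine (h.const_mul (√(2 * π))⁻¹).congr fun z => ?_
  simp only [φ_eq_mul_gaussian, rpow_natCast]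
  ring_nf

section PolynomialMulφ

variable {R : Type*} [CommSemiring R] [Algebra R ℝ]

lemma integrable_aeval_mul_φ (p : R[X]) : Integrable fun z => aeval z p * φ z := by
  induction p using Polynomial.induction_on' with
  | add p q hp hq =>
    refine (hp.add hq).congr (.of_forall fun z => ?_)
    simp only [Pi.add_apply, map_add, add_mul]
  | monomial k a =>
    simpa only [aeval_monomial, mul_assoc] using (integrable_pow_mul_φ k).const_mul _

lemma tendsto_aeval_mul_φ_atTop (p : R[X]) :
    Tendsto (fun z => aeval z p * φ z) atTop (𝓝 0) := by
  induction p using Polynomial.induction_on' with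
  | add p q hp hq => simpa only [map_add, add_mul, add_zero] using hp.add hq
  | monomial k a =>
    simpa only [aeval_monomial, mul_assoc, mul_zero] using
      (tendsto_pow_mul_φ_atTop k).const_mul _

end PolynomialMulφ

lemma mul_iteratedDeriv_φ (n : ℕ) (z : ℝ) :
    z * iteratedDeriv n φ z = aeval z ((-1) ^ n * X * hermite n) * φ z := by
  rw [iteratedDeriv_φ]
  simp only [map_mul, map_pow, map_neg, map_one, aeval_X]
  ring

lemma integrable_mul_iteratedDeriv_φ (n : ℕ) :
    Integrable fun z => z * iteratedDeriv n φ z := by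
  simpa only [mul_iteratedDeriv_φ] using integrable_aeval_mul_φ _

lemma tendsto_mul_iteratedDeriv_φ_atTop (n : ℕ) :
    Tendsto (fun z => z * iteratedDeriv n φ z) atTop (𝓝 0) := by
  simpa only [mul_iteratedDeriv_φ] using tendsto_aeval_mul_φ_atTop _

lemma tendsto_iteratedDeriv_φ_atTop (n : ℕ) : Tendsto (iteratedDeriv n φ) atTop (𝓝 0) := by
  refine (tendsto_aeval_mul_φ_atTop ((-1) ^ n * hermite n)).congr fun z => ?_
  simp only [iteratedDeriv_φ, map_mul, map_pow, map_neg, map_one]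

lemma integral_Ioi_mul_iteratedDeriv_φ (n : ℕ) :
    ∫ z in Ioi 0, z * iteratedDeriv (n + 2) φ z = iteratedDeriv n φ 0 := by
  have hderiv : ∀ z ∈ Ici (0 : ℝ), HasDerivAt
      (fun z => z * iteratedDeriv (n + 1) φ z - iteratedDeriv n φ z)
      (z * iteratedDeriv (n + 2) φ z) z := fun z _ => by
    refine (((hasDerivAt_id z).mul (hasDerivAt_iteratedDeriv_φ (n + 1) z)).sub
      (hasDerivAt_iteratedDeriv_φ n z)).congr_deriv ?_
    simp only [id, one_mul, add_sub_cancel_left]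
  have hlim : Tendsto (fun z => z * iteratedDeriv (n + 1) φ z - iteratedDeriv n φ z)
      atTop (𝓝 0) := by
    simpa using (tendsto_mul_iteratedDeriv_φ_atTop (n + 1)).sub (tendsto_iteratedDeriv_φ_atTop n)
  rw [integral_Ioi_of_hasDerivAt_of_tendsto' hderiv
    (integrable_mul_iteratedDeriv_φ _).integrableOn hlim]
  simp

lemma integral_Ioi_mul_φ : ∫ z in Ioi 0, z * φ z = φ 0 := by
  have hderiv : ∀ z ∈ Ici (0 : ℝ), HasDerivAt (fun z => -φ z) (z * φ z) z := fun z _ => by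
    refine (hasDerivAt_iteratedDeriv_φ 0 z).neg.congr_deriv ?_
    simp only [zero_add, iteratedDeriv_φ, hermite_one, aeval_X]
    ring
  have hint : IntegrableOn (fun z => z * φ z) (Ioi 0) := by
    simpa using (integrable_mul_iteratedDeriv_φ 0).integrableOn
  have hlim : Tendsto (fun z => -φ z) atTop (𝓝 0) := by
    simpa using (tendsto_iteratedDeriv_φ_atTop 0).neg
  rw [integral_Ioi_of_hasDerivAt_of_tendsto' hderiv hint hlim]
  simp

lemma iteratedDeriv_φ_zero (n : ℕ) :
    iteratedDeriv n φ 0 = (-1) ^ n * (hermite n).coeff 0 * φ 0 := by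
  rw [iteratedDeriv_φ, ← coeff_zero_eq_aeval_zero', algebraMap_int_eq, eq_intCast]

lemma φ_zero : φ 0 = 1 / √(2 * π) := by
  simp [φ]

/-- At-the-money Edgeworth price. -/
theorem edgeworth_atm_price (ν B μ3 μ4 : ℝ) :
    ν * B * (∫ z in Set.Ioi (0 : ℝ), z * g₂ μ3 μ4 z) =
      1 / Real.sqrt (2 * Real.pi) * ν * B * (1 - (μ4 - 3 - μ3 ^ 2) / 24) := by
  have hsplit : ∀ z, z * g₂ μ3 μ4 z = z * φ z - μ3 / 6 * (z * iteratedDeriv 3 φ z)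
      + (μ4 - 3) / 24 * (z * iteratedDeriv 4 φ z) + μ3 ^ 2 / 72 * (z * iteratedDeriv 6 φ z) := by
    intro z
    simp only [g₂, g₁, ← φ_mul_H]
    ring
  have hint (n : ℕ) := (integrable_mul_iteratedDeriv_φ n).integrableOn (s := Ioi 0)
  have hint0 : IntegrableOn (fun z => z * φ z) (Ioi 0) := by simpa using hint 0
  have h3 : ∫ z in Ioi 0, z * iteratedDeriv 3 φ z = 0 := by
    rw [integral_Ioi_mul_iteratedDeriv_φ 1, iteratedDeriv_φ_zero]
    simp
  have h4 : ∫ z in Ioi 0, z * iteratedDeriv 4 φ z = -φ 0 := by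
    rw [integral_Ioi_mul_iteratedDeriv_φ 2, iteratedDeriv_φ_zero]
    simp
  have h6 : ∫ z in Ioi 0, z * iteratedDeriv 6 φ z = 3 * φ 0 := by
    rw [integral_Ioi_mul_iteratedDeriv_φ 4, iteratedDeriv_φ_zero]
    norm_num
  simp_rw [hsplit]
  rw [integral_add, integral_add, integral_sub, integral_const_mul, integral_const_mul,
    integral_const_mul, integral_Ioi_mul_φ, h3, h4, h6, φ_zero]
  · ring
  exacts [hint0, (hint 3).const_mul _, hint0.sub ((hint 3).const_mul _), (hint 4).const_mul _,
    (hint0.sub ((hint 3).const_mul _)).add ((hint 4).const_mul _), (hint 6).const_mul _]
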